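/- arXiv:1204.2900 — 4 statements merged into one kernel-verified Lean document; each statement's English description precedes it below -/
import Mathlib

section
/- Let q ≥ 2 and let p be a positive integer, and set m = pq. The code C = All(pq,q) in H(pq,q) has covering radius ρ = p(q−1), and its cell C_ρ at maximal distance equals the repetition code Rep(m,q) = {(a,…,a) : a ∈ Q}. -/
open Equiv Pointwise

section HammingDefs

variable {I : Type*} [Fintype I] [DecidableEq I] {q : ℕ}

/-- The permutation of the vertex set of the Hamming graph `H(I,q)` induced by the
letter permutations `g i` (acting coordinatewise) followed by the coordinate
permutation `σ`:  `(α^x)_i = g_{σ⁻¹ i} (α_{σ⁻¹ i})`. -/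
def tvp (g : I → Equiv.Perm (Fin q)) (σ : Equiv.Perm I) : Equiv.Perm (I → Fin q) where
  toFun α i := g (σ⁻¹ i) (α (σ⁻¹ i))
  invFun β i := (g i)⁻¹ (β (σ i))
  left_inv α := by funext i; simp
  right_inv β := by funext i; simp

/-- The automorphism group of the Hamming graph `H(I,q)`: all permutations of the
vertex set preserving adjacency (Hamming distance 1). -/
def autH (I : Type*) [Fintype I] [DecidableEq I] (q : ℕ) :
    Subgroup (Equiv.Perm (I → Fin q)) where
  carrier := {y | ∀ α β : I → Fin q, hammingDist (y α) (y β) = 1 ↔ hammingDist α β = 1}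
  one_mem' := by intro α β; simp
  mul_mem' := by
    intro a b ha hb α β
    rw [Equiv.Perm.mul_apply, Equiv.Perm.mul_apply, ha, hb]
  inv_mem' := by
    intro a ha α β
    simpa using (ha (a⁻¹ α) (a⁻¹ β)).symm

/-- The homomorphism `S_q × S_I → Sym(V(H(I,q)))` whose image is `Diag(S_q) ⋊ L`. -/
def diagLHom (I : Type*) [Fintype I] [DecidableEq I] (q : ℕ) :
    Equiv.Perm (Fin q) × Equiv.Perm I →* Equiv.Perm (I → Fin q) where
  toFun x := tvp (fun _ => x.1) x.2
  map_one' := by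
    ext α i
    simp [tvp]
  map_mul' x y := by
    ext α i
    simp [tvp, mul_inv_rev]

/-- The subgroup `Diag_I(S_q) ⋊ L` of the automorphism group of `H(I,q)`. -/
def diagL (I : Type*) [Fintype I] [DecidableEq I] (q : ℕ) :
    Subgroup (Equiv.Perm (I → Fin q)) :=
  (diagLHom I q).range

/-- The subgroup `L` of pure coordinate permutations of `H(I,q)`. -/
def permL (I : Type*) [Fintype I] [DecidableEq I] (q : ℕ) :
    Subgroup (Equiv.Perm (I → Fin q)) :=
  ((diagLHom I q).comp (MonoidHom.inr (Equiv.Perm (Fin q)) (Equiv.Perm I))).range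

/-- Distance from a vertex to a code. -/
noncomputable def distC (γ : I → Fin q) (C : Set (I → Fin q)) : ℕ :=
  sInf {d | ∃ β ∈ C, hammingDist γ β = d}

/-- The cell `C_i` of the distance partition of the code `C`. -/
def cell (C : Set (I → Fin q)) (i : ℕ) : Set (I → Fin q) :=
  {γ | distC γ C = i}

/-- The covering radius of the code `C`. -/
noncomputable def covRad (C : Set (I → Fin q)) : ℕ :=
  sSup {d | ∃ γ : I → Fin q, distC γ C = d}

/-- The minimum distance of the code `C`. -/
noncomputable def minDist (C : Set (I → Fin q)) : ℕ :=
  sInf {d | ∃ β ∈ C, ∃ γ ∈ C, β ≠ γ ∧ hammingDist β γ = d}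

/-- `S` is an orbit of the subgroup `X` of permutations of the vertex set. -/
def IsOrbitOf (X : Subgroup (Equiv.Perm (I → Fin q))) (S : Set (I → Fin q)) : Prop :=
  ∃ v, S = {w | ∃ x ∈ X, x v = w}

/-- `C` is `X`-neighbour transitive: `X` is a group of automorphisms of the Hamming
graph, and both `C` and its set of neighbours `C_1` are `X`-orbits. -/
def NbrTransitive (X : Subgroup (Equiv.Perm (I → Fin q))) (C : Set (I → Fin q)) : Prop :=
  X ≤ autH I q ∧ IsOrbitOf X C ∧ IsOrbitOf X (cell C 1)

/-- `C` is `X`-completely transitive: every cell of the distance partition is an `X`-orbit. -/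
def ComplTransitive (X : Subgroup (Equiv.Perm (I → Fin q))) (C : Set (I → Fin q)) : Prop :=
  X ≤ autH I q ∧ ∀ i ≤ covRad C, IsOrbitOf X (cell C i)

/-- `C` is diagonally `X`-neighbour transitive. -/
def DiagNbrTransitive (X : Subgroup (Equiv.Perm (I → Fin q))) (C : Set (I → Fin q)) : Prop :=
  NbrTransitive X C ∧ X ≤ diagL I q

/-- The automorphism group of the code `C`: the setwise stabiliser of `C` in the
automorphism group of the Hamming graph. -/
def autCode (C : Set (I → Fin q)) : Subgroup (Equiv.Perm (I → Fin q)) :=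
  autH I q ⊓ MulAction.stabilizer (Equiv.Perm (I → Fin q)) C

/-- Number of occurrences of the letter `a` in the vertex `α`. -/
def cnt (α : I → Fin q) (a : Fin q) : ℕ :=
  (Finset.univ.filter fun i => α i = a).card

/-- The composition `Q(α)` of a vertex: the set of pairs `(a, p)` such that the letter `a`
occurs exactly `p > 0` times in `α`. -/
def compOf (α : I → Fin q) : Set (Fin q × ℕ) :=
  {x | 0 < x.2 ∧ cnt α x.1 = x.2}

/-- `Num(α)`: the set of pairs `(p, s)` such that exactly `s > 0` distinct letters occur
exactly `p > 0` times in `α`. -/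
def numOf (α : I → Fin q) : Set (ℕ × ℕ) :=
  {x | 0 < x.1 ∧ 0 < x.2 ∧ (Finset.univ.filter fun a => cnt α a = x.1).card = x.2}

/-- The repetition code `Rep(I,q)`. -/
def repCode (I : Type*) [Fintype I] [DecidableEq I] (q : ℕ) : Set (I → Fin q) :=
  {α | ∃ a, α = fun _ => a}

/-- The injection code `Inj(I,q)`: all tuples with pairwise distinct entries. -/
def injCode (I : Type*) [Fintype I] [DecidableEq I] (q : ℕ) : Set (I → Fin q) :=
  {α | Function.Injective α}

/-- The code `All(pq,q)`: all vertices in which every letter occurs exactly `p` times. -/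
def allCode (I : Type*) [Fintype I] [DecidableEq I] (q p : ℕ) : Set (I → Fin q) :=
  {α | ∀ a, cnt α a = p}

/-- `C` is `s`-regular. -/
def RegularUpTo (C : Set (I → Fin q)) (s : ℕ) : Prop :=
  ∀ i ≤ s, ∀ γ ∈ cell C i, ∀ γ' ∈ cell C i, ∀ k : ℕ,
    {β ∈ C | hammingDist γ β = k}.ncard = {β ∈ C | hammingDist γ' β = k}.ncard

/-- `C` is completely regular. -/
def ComplRegular (C : Set (I → Fin q)) : Prop :=
  RegularUpTo C (covRad C)

/-- `C` is a constant composition code: every letter occurs the same positive number of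
times in every codeword. -/
def IsCCC (C : Set (I → Fin q)) : Prop :=
  C.Nonempty ∧ ∃ f : Fin q → ℕ, (∀ a, 0 < f a) ∧ ∀ β ∈ C, ∀ a, cnt β a = f a

end HammingDefs

section Weight

/-- The weight of a binary vertex: number of nonzero entries. -/
def wt {m : ℕ} (α : Fin m → Fin 2) : ℕ :=
  (Finset.univ.filter fun i => α i ≠ 0).card

/-- The code `W([m/2],2)`: binary `m`-tuples of weight `(m+1)/2` or `(m-1)/2`. -/
def wCode (m : ℕ) : Set (Fin m → Fin 2) :=
  {α | wt α = (m+1)/2 ∨ wt α = (m-1)/2}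

/-- The code `W([m/2],2)` over a general alphabet (used when `q = 2`): vertices in which
one letter occurs `(m+1)/2` times and another `(m-1)/2` times. -/
def wCodeGen (m q : ℕ) : Set (Fin m → Fin q) :=
  {α | ∃ a b : Fin q, a ≠ b ∧ cnt α a = (m+1)/2 ∧ cnt α b = (m-1)/2}

end Weight

section PermCodes

/-- The vertex `α(g) = (1^g, …, q^g)` of `H(q,q)` associated with a permutation `g`. -/
def alphaVtx {q : ℕ} (g : Equiv.Perm (Fin q)) : Fin q → Fin q := fun i => g i

/-- The permutation code generated by a set `T` of permutations. -/
def permCode {q : ℕ} (T : Set (Equiv.Perm (Fin q))) : Set (Fin q → Fin q) :=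
  alphaVtx '' T

end PermCodes

section Repetition

variable {I : Type*} [Fintype I] [DecidableEq I] {q : ℕ}

/-- The `p`-fold repetition `rep_p(α) = (α,…,α)`, a vertex of `H(p·|I|, q)`. -/
def repv (p : ℕ) (α : I → Fin q) : Fin p × I → Fin q := fun ji => α ji.2

/-- The `p`-fold repetition code `Rep_p(C)`. -/
def repCodeP (p : ℕ) (C : Set (I → Fin q)) : Set (Fin p × I → Fin q) :=
  repv p '' C

/-- The homomorphism `Sym(V(H(I,q))) × S_p → Sym(V(H(p·|I|,q)))`: the pair `(x,σ)` acts on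
`p`-tuples of vertices by `(α_1,…,α_p) ↦ (α_{σ⁻¹(1)}^x, …, α_{σ⁻¹(p)}^x)`. -/
def repHom (p : ℕ) (I : Type*) [Fintype I] [DecidableEq I] (q : ℕ) :
    Equiv.Perm (I → Fin q) × Equiv.Perm (Fin p) →* Equiv.Perm (Fin p × I → Fin q) where
  toFun x :=
    { toFun := fun β ji => x.1 (fun i => β (x.2⁻¹ ji.1, i)) ji.2
      invFun := fun β ji => x.1⁻¹ (fun i => β (x.2 ji.1, i)) ji.2
      left_inv := by intro β; funext ji; simp
      right_inv := by intro β; funext ji; simp }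
  map_one' := by ext β ji; simp
  map_mul' x y := by ext β ji; simp [mul_inv_rev]

end Repetition

section AuxProof

variable {p q : ℕ}

private lemma cnt_sum_aux {m q : ℕ} (γ : Fin m → Fin q) : ∑ a, cnt γ a = m := by
  unfold cnt
  rw [← Finset.card_eq_sum_card_fiberwise (fun x _ => Finset.mem_univ (γ x))]
  simp

/-- Upper bound: there is a codeword within distance `∑ a, (cnt γ a - p)`. -/
private lemma exists_close (hq : 2 ≤ q) (hp : 0 < p) :
    ∀ n (γ : Fin (p * q) → Fin q), (∑ a, (cnt γ a - p)) = n →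
      ∃ β ∈ allCode (Fin (p * q)) q p, hammingDist γ β ≤ n := by
  intro n
  induction n with
  | zero =>
    intro γ h
    have hle : ∀ a, cnt γ a ≤ p := by
      intro a
      have := Finset.sum_eq_zero_iff.mp h a (Finset.mem_univ a)
      omega
    have hsum : ∑ a, cnt γ a = ∑ _a : Fin q, p := by
      rw [cnt_sum_aux]; simp [mul_comm]
    have hall : ∀ a, cnt γ a = p := by
      intro a
      exact (Finset.sum_eq_sum_iff_of_le (fun i _ => hle i)).mp hsum a (Finset.mem_univ a)
    exact ⟨γ, hall, by simp⟩
  | succ n ih =>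
    intro γ h
    -- find an overfull letter a
    have hex : ∃ a, p < cnt γ a := by
      by_contra hA
      push_neg at hA
      have : ∑ a, (cnt γ a - p) = 0 :=
        Finset.sum_eq_zero fun a _ => by have := hA a; omega
      omega
    obtain ⟨a, ha⟩ := hex
    -- find an underfull letter b
    have hexb : ∃ b, cnt γ b < p := by
      by_contra hB
      push_neg at hB
      have hlt : ∑ _a : Fin q, p < ∑ a, cnt γ a :=
        Finset.sum_lt_sum (fun i _ => hB i) ⟨a, Finset.mem_univ a, ha⟩
      rw [cnt_sum_aux] at hlt
      simp [mul_comm] at hlt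
    obtain ⟨b, hb⟩ := hexb
    have hab : a ≠ b := by intro e; rw [e] at ha; omega
    -- find a position with letter a
    have hpos : (Finset.univ.filter fun i => γ i = a).Nonempty := by
      rw [← Finset.card_pos]
      have : 0 < cnt γ a := by omega
      exact this
    obtain ⟨i, hi⟩ := hpos
    have hγi : γ i = a := (Finset.mem_filter.mp hi).2
    set γ' : Fin (p * q) → Fin q := Function.update γ i b with hγ'
    have hfa : (Finset.univ.filter fun j => γ' j = a) =
        (Finset.univ.filter fun j => γ j = a).erase i := by
      ext j
      by_cases hj : j = i <;>
        simp [hγ', Function.update, hj, hγi, hab.symm, Ne.symm hab, hab]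
    have hcnta : cnt γ' a = cnt γ a - 1 := by
      unfold cnt
      rw [hfa, Finset.card_erase_of_mem hi]
    have hfb : (Finset.univ.filter fun j => γ' j = b) =
        insert i (Finset.univ.filter fun j => γ j = b) := by
      ext j
      by_cases hj : j = i <;> simp [hγ', Function.update, hj]
    have hcntb : cnt γ' b = cnt γ b + 1 := by
      unfold cnt
      rw [hfb, Finset.card_insert_of_notMem (by simp [hγi, hab])]
    have hcntc : ∀ c, c ≠ a → c ≠ b → cnt γ' c = cnt γ c := by
      intro c hc1 hc2
      unfold cnt
      congr 1
      ext j
      by_cases hj : j = i <;>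
        simp [hγ', Function.update, hj, hγi, Ne.symm hc1, Ne.symm hc2]
    have hupdate : (fun c => cnt γ' c - p) =
        Function.update (fun c => cnt γ c - p) a (cnt γ a - p - 1) := by
      funext c
      by_cases hc : c = a
      · subst hc; simp [Function.update, hcnta]; omega
      · rw [Function.update_of_ne hc]
        by_cases hcb : c = b
        · subst hcb; rw [hcntb]; omega
        · rw [hcntc c hc hcb]
    have hsum' : ∑ c, (cnt γ' c - p) = n := by
      rw [hupdate, Finset.sum_update_of_mem (Finset.mem_univ a)]
      have hsplit : ∑ c, (cnt γ c - p) =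
          (cnt γ a - p) + ∑ c ∈ Finset.univ.erase a, (cnt γ c - p) :=
        (Finset.add_sum_erase _ _ (Finset.mem_univ a)).symm
      rw [Finset.erase_eq] at hsplit
      omega
    obtain ⟨β, hβC, hβd⟩ := ih γ' hsum'
    refine ⟨β, hβC, ?_⟩
    have htri := hammingDist_triangle γ γ' β
    have hd1 : hammingDist γ γ' ≤ 1 := by
      have hsub : (Finset.univ.filter fun j => γ j ≠ γ' j) ⊆ {i} := by
        intro j hj
        simp only [Finset.mem_filter, Finset.mem_univ, true_and] at hj
        by_contra hji
        simp only [Finset.mem_singleton] at hji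
        exact hj (by simp [hγ', Function.update, hji])
      calc hammingDist γ γ' = (Finset.univ.filter fun j => γ j ≠ γ' j).card := rfl
        _ ≤ ({i} : Finset (Fin (p * q))).card := Finset.card_le_card hsub
        _ = 1 := by simp
    omega

/-- Lower bound: every codeword is at distance at least `∑ a, (cnt γ a - p)`. -/
private lemma le_hamming (γ : Fin (p * q) → Fin q) (β : Fin (p * q) → Fin q)
    (hβ : β ∈ allCode (Fin (p * q)) q p) :
    ∑ a, (cnt γ a - p) ≤ hammingDist γ β := by
  have hcard : hammingDist γ β =
      ∑ a, ((Finset.univ.filter fun i => γ i ≠ β i).filter fun i => γ i = a).card :=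
    Finset.card_eq_sum_card_fiberwise (fun x _ => Finset.mem_univ (γ x))
  rw [hcard]
  refine Finset.sum_le_sum fun a _ => ?_
  have hsub : (Finset.univ.filter fun i => γ i = a) ⊆
      ((Finset.univ.filter fun i => γ i ≠ β i).filter fun i => γ i = a) ∪
        (Finset.univ.filter fun i => β i = a) := by
    intro j hj
    simp only [Finset.mem_filter, Finset.mem_univ, true_and] at hj
    by_cases hjb : γ j = β j
    · exact Finset.mem_union_right _ (by simp [← hjb, hj])
    · refine Finset.mem_union_left _ ?_
      simp only [Finset.mem_filter, Finset.mem_univ, true_and]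
      exact ⟨hjb, hj⟩
  have hcntβ : (Finset.univ.filter fun i => β i = a).card = p := hβ a
  have := (Finset.card_le_card hsub).trans (Finset.card_union_le _ _)
  unfold cnt
  omega

/-- The exact distance formula. -/
private lemma distC_allCode (hq : 2 ≤ q) (hp : 0 < p) (γ : Fin (p * q) → Fin q) :
    distC γ (allCode (Fin (p * q)) q p) = ∑ a, (cnt γ a - p) := by
  obtain ⟨β, hβC, hβd⟩ := exists_close hq hp _ γ rfl
  unfold distC
  apply le_antisymm
  · have hmem : hammingDist γ β ∈
        {d | ∃ b ∈ allCode (Fin (p * q)) q p, hammingDist γ b = d} := ⟨β, hβC, rfl⟩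
    exact (Nat.sInf_le hmem).trans hβd
  · refine le_csInf ⟨hammingDist γ β, β, hβC, rfl⟩ ?_
    rintro d ⟨β', hβ', rfl⟩
    exact le_hamming γ β' hβ'

private lemma D_le (hq : 2 ≤ q) (hp : 0 < p) (γ : Fin (p * q) → Fin q) :
    ∑ a, (cnt γ a - p) ≤ p * q - p := by
  by_cases hA : ∀ a, cnt γ a ≤ p
  · have : ∑ a, (cnt γ a - p) = 0 := Finset.sum_eq_zero fun a _ => by have := hA a; omega
    omega
  · push_neg at hA
    obtain ⟨a, ha⟩ := hA
    have h1 : ∑ c, (cnt γ c - p) =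
        (cnt γ a - p) + ∑ c ∈ Finset.univ.erase a, (cnt γ c - p) :=
      (Finset.add_sum_erase _ _ (Finset.mem_univ a)).symm
    have h2 : ∑ c ∈ Finset.univ.erase a, (cnt γ c - p) ≤
        ∑ c ∈ Finset.univ.erase a, cnt γ c :=
      Finset.sum_le_sum fun c _ => Nat.sub_le _ _
    have h3 : cnt γ a + ∑ c ∈ Finset.univ.erase a, cnt γ c = p * q := by
      rw [Finset.add_sum_erase _ _ (Finset.mem_univ a), cnt_sum_aux]
    omega

private lemma D_eq_const (hq : 2 ≤ q) (hp : 0 < p) (γ : Fin (p * q) → Fin q)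
    (h : ∑ a, (cnt γ a - p) = p * q - p) : ∃ a, γ = fun _ => a := by
  have hpq : p < p * q := by
    calc p = p * 1 := by omega
    _ < p * q := by exact (Nat.mul_lt_mul_left hp).mpr (by omega)
  have hex : ∃ a, p < cnt γ a := by
    by_contra hA
    push_neg at hA
    have : ∑ a, (cnt γ a - p) = 0 := Finset.sum_eq_zero fun a _ => by have := hA a; omega
    omega
  obtain ⟨a, ha⟩ := hex
  have h1 : ∑ c, (cnt γ c - p) =
      (cnt γ a - p) + ∑ c ∈ Finset.univ.erase a, (cnt γ c - p) :=
    (Finset.add_sum_erase _ _ (Finset.mem_univ a)).symm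
  have h2 : ∑ c ∈ Finset.univ.erase a, (cnt γ c - p) ≤
      ∑ c ∈ Finset.univ.erase a, cnt γ c :=
    Finset.sum_le_sum fun c _ => Nat.sub_le _ _
  have h3 : cnt γ a + ∑ c ∈ Finset.univ.erase a, cnt γ c = p * q := by
    rw [Finset.add_sum_erase _ _ (Finset.mem_univ a), cnt_sum_aux]
  have hR : ∑ c ∈ Finset.univ.erase a, (cnt γ c - p) =
      ∑ c ∈ Finset.univ.erase a, cnt γ c := by omega
  have hzero : ∀ c ∈ Finset.univ.erase a, cnt γ c = 0 := by
    intro c hc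
    have := (Finset.sum_eq_sum_iff_of_le
      (fun i (_ : i ∈ Finset.univ.erase a) => Nat.sub_le (cnt γ i) p)).mp hR c hc
    omega
  have hT : ∑ c ∈ Finset.univ.erase a, cnt γ c = 0 := Finset.sum_eq_zero hzero
  have hcnta : cnt γ a = p * q := by omega
  refine ⟨a, ?_⟩
  have hfull : (Finset.univ.filter fun i => γ i = a) = Finset.univ := by
    apply Finset.eq_of_subset_of_card_le (Finset.filter_subset _ _)
    have : (Finset.univ : Finset (Fin (p * q))).card = p * q := by simp
    unfold cnt at hcnta
    omega
  funext i
  have : i ∈ Finset.univ.filter fun j => γ j = a := by rw [hfull]; exact Finset.mem_univ i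
  exact (Finset.mem_filter.mp this).2

private lemma D_const (hq : 2 ≤ q) (hp : 0 < p) (a : Fin q) :
    ∑ b, (cnt (fun _ : Fin (p * q) => a) b - p) = p * q - p := by
  have hcnta : cnt (fun _ : Fin (p * q) => a) a = p * q := by
    unfold cnt; simp
  have hcntb : ∀ b, b ≠ a → cnt (fun _ : Fin (p * q) => a) b = 0 := by
    intro b hb
    unfold cnt
    simp [Finset.filter_eq_empty_iff, Ne.symm hb]
  rw [Finset.sum_eq_single a (fun b _ hb => by rw [hcntb b hb]; simp) (by simp)]
  rw [hcnta]

end AuxProof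
/-- Corollary 3.4(ii): for `m = pq`, the code `C = All(pq,q)` has
covering radius `ρ = p(q-1)` and `C_ρ = Rep(m,q)`. -/
theorem allCode_covering_radius (p q : ℕ) (hq : 2 ≤ q) (hp : 0 < p) :
    covRad (allCode (Fin (p * q)) q p) = p * (q - 1) ∧
    cell (allCode (Fin (p * q)) q p) (p * (q - 1)) = repCode (Fin (p * q)) q := by
  have hmul : p * (q - 1) = p * q - p := by rw [Nat.mul_sub, mul_one]
  have hq0 : 0 < q := by omega
  set C := allCode (Fin (p * q)) q p with hC
  have hdist : ∀ a : Fin q, distC (fun _ : Fin (p * q) => a) C = p * q - p := by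
    intro a
    rw [hC, distC_allCode hq hp, D_const hq hp]
  have hne : {d | ∃ γ : Fin (p * q) → Fin q, distC γ C = d}.Nonempty :=
    ⟨p * q - p, fun _ => (⟨0, hq0⟩ : Fin q), hdist _⟩
  have hub : ∀ d ∈ {d | ∃ γ : Fin (p * q) → Fin q, distC γ C = d}, d ≤ p * q - p := by
    rintro d ⟨γ, rfl⟩
    rw [hC, distC_allCode hq hp]
    exact D_le hq hp γ
  have hbdd : BddAbove {d | ∃ γ : Fin (p * q) → Fin q, distC γ C = d} := ⟨p * q - p, hub⟩
  constructor
  · apply le_antisymm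
    · rw [hmul]
      exact csSup_le hne hub
    · rw [hmul]
      exact le_csSup hbdd ⟨fun _ => (⟨0, hq0⟩ : Fin q), hdist _⟩
  · ext γ
    constructor
    · intro hγ
      have h2 : distC γ C = p * (q - 1) := hγ
      rw [hC, distC_allCode hq hp, hmul] at h2
      exact D_eq_const hq hp γ h2
    · rintro ⟨a, rfl⟩
      show distC _ C = _
      rw [hdist a, hmul]
end

section
/- Let 1 < m < q. The injection code Inj(m,q), consisting of all m-tuples over Q with pairwise distinct entries, is a connected subset of the vertex set of H(m,q): any two of its elements are joined by a path of the Hamming graph all of whose vertices lie in Inj(m,q). -/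
open Equiv Pointwise

section helpers


variable {m q : ℕ}

private lemma inj_update_of_not_mem {α : Fin m → Fin q} (hα : Function.Injective α)
    (i : Fin m) {c : Fin q} (hc : c ∉ Set.range α) :
    Function.Injective (Function.update α i c) := by
  intro a b hab
  rw [Function.update_apply, Function.update_apply] at hab
  by_cases ha : a = i <;> by_cases hb : b = i <;> simp [ha, hb] at hab ⊢
  · exact absurd ⟨b, hab.symm⟩ hc
  · exact absurd ⟨a, hab⟩ hc
  · exact hα hab

private lemma dist_update_self {α : Fin m → Fin q} {i : Fin m} {c : Fin q} (h : c ≠ α i) :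
    hammingDist (Function.update α i c) α = 1 := by
  unfold hammingDist
  rw [show ({j | Function.update α i c j ≠ α j} : Finset (Fin m)) = {i} by
    ext j
    simp only [Finset.mem_filter, Finset.mem_univ, true_and, Finset.mem_singleton,
      Function.update_apply]
    constructor
    · intro hj; by_contra hji; simp [hji] at hj
    · intro hj; simp [hj, h]]
  simp

private lemma dist_update_lt {α β : Fin m → Fin q} {i : Fin m} (h : α i ≠ β i) :
    hammingDist (Function.update α i (β i)) β < hammingDist α β := by
  unfold hammingDist
  apply Finset.card_lt_card
  constructor
  · intro j hj
    simp only [Finset.mem_filter, Finset.mem_univ, true_and, Function.update_apply] at hj ⊢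
    by_cases hji : j = i
    · simp [hji] at hj
    · simpa [hji] using hj
  · intro hsub
    have := hsub (by simp [h] : i ∈ ({j | α j ≠ β j} : Finset (Fin m)))
    simp at this

private lemma dist_update_le {α β : Fin m → Fin q} {i : Fin m} {c : Fin q} (h : α i ≠ β i) :
    hammingDist (Function.update α i c) β ≤ hammingDist α β := by
  unfold hammingDist
  apply Finset.card_le_card
  intro j hj
  simp only [Finset.mem_filter, Finset.mem_univ, true_and, Function.update_apply] at hj ⊢
  by_cases hji : j = i
  · simp [hji, h]
  · simpa [hji] using hj

private lemma exists_fresh (hmq : m < q) {α : Fin m → Fin q} (hα : Function.Injective α) :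
    ∃ c, c ∉ Set.range α := by
  by_contra hc
  push_neg at hc
  have : Function.Surjective α := fun c => hc c
  have := Fintype.card_le_of_surjective α this
  simp at this
  omega

end helpers

/-- Lemma 4.2, first part: for `1 < m < q`, the injection code
`Inj(m,q)` is a connected subset of the vertex set of `H(m,q)`. -/
theorem injCode_connected (m q : ℕ) (hm : 1 < m) (hmq : m < q) :
    ∀ α ∈ injCode (Fin m) q, ∀ β ∈ injCode (Fin m) q,
      Relation.ReflTransGen
        (fun u v => u ∈ injCode (Fin m) q ∧ v ∈ injCode (Fin m) q ∧ hammingDist u v = 1)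
        α β := by
  intro α hα β hβ
  generalize hn : hammingDist α β = n
  induction n using Nat.strong_induction_on generalizing α with
  | _ n ih =>
  rcases Nat.eq_zero_or_pos n with h0 | hpos
  · subst h0
    rw [hammingDist_eq_zero.mp hn]
  · have hne : α ≠ β := by
      intro h; rw [h, hammingDist_self] at hn; omega
    obtain ⟨i, hi⟩ : ∃ i, α i ≠ β i := by
      by_contra h; push_neg at h; exact hne (funext h)
    by_cases hrange : β i ∈ Set.range α
    · -- two steps: first clear the coordinate j with α j = β i
      obtain ⟨j, hj⟩ := hrange
      have hji : j ≠ i := fun h => hi (h ▸ hj)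
      obtain ⟨c, hc⟩ := exists_fresh hmq hα
      set α' := Function.update α j c with hα'def
      have hcα : c ≠ α j := fun h => hc ⟨j, h.symm⟩
      have hα' : Function.Injective α' := inj_update_of_not_mem hα j hc
      have hjβ : α j ≠ β j := by
        rw [hj]; exact fun h => hji (hβ h.symm)
      have hstep1 : hammingDist α α' = 1 := by
        rw [hammingDist_comm]; exact dist_update_self hcα
      have hle : hammingDist α' β ≤ n := hn ▸ dist_update_le hjβ
      -- at coordinate i, α' i = α i ≠ β i, and β i ∉ range α'
      have hα'i : α' i = α i := Function.update_of_ne hji.symm c α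
      have hα'i' : α' i ≠ β i := hα'i ▸ hi
      have hrange' : β i ∉ Set.range α' := by
        rintro ⟨k, hk⟩
        rw [hα'def, Function.update_apply] at hk
        by_cases hkj : k = j
        · rw [if_pos hkj] at hk; exact hc ⟨j, (hk.trans hj.symm).symm⟩
        · rw [if_neg hkj] at hk
          exact hkj (hα (hk.trans hj.symm))
      set α'' := Function.update α' i (β i) with hα''def
      have hα'' : Function.Injective α'' := inj_update_of_not_mem hα' i hrange'
      have hstep2 : hammingDist α' α'' = 1 := by
        rw [hammingDist_comm]; exact dist_update_self (Ne.symm hα'i')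
      have hlt : hammingDist α'' β < n := lt_of_lt_of_le (dist_update_lt hα'i') hle
      have htail := ih _ hlt α'' hα'' rfl
      exact Relation.ReflTransGen.head ⟨hα, hα', hstep1⟩
        (Relation.ReflTransGen.head ⟨hα', hα'', hstep2⟩ htail)
    · set α' := Function.update α i (β i) with hα'def
      have hα' : Function.Injective α' := inj_update_of_not_mem hα i hrange
      have hstep : hammingDist α α' = 1 := by
        rw [hammingDist_comm]; exact dist_update_self (Ne.symm hi)
      have hlt : hammingDist α' β < n := hn ▸ dist_update_lt hi
      exact Relation.ReflTransGen.head ⟨hα, hα', hstep⟩ (ih _ hlt α' hα' rfl)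
end

section
/- Let C be a diagonally X-neighbour transitive code in H(m,q) (m,q ≥ 2). Then one of the following holds: (i) C = {(a,…,a)} for some letter a; (ii) C = Rep(m,q); (iii) C = Inj(m,q) with m < q; (iv) C = W([m/2],2) with q = 2 and m ≥ 3 odd; or (v) m = pq for some positive integer p and C ⊆ All(pq,q). -/
open Equiv Pointwise

/-! A diagonal automorphism permutes the coordinates and renames the letters uniformly, so it
preserves the profile of a vertex: the number of letters occurring exactly `k` times, for each
`k`. Hence all codewords share one profile and all vertices at distance one from `C` share
another. Let `v` be a codeword that is not constant and `k` its largest letter count. Moving a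
coordinate of `v` onto a letter of count `k` creates a count `k + 1`, so that vertex lies in
`C_1`; consequently every neighbour of a codeword whose counts stay at most `k` lies in `C`.
Comparing profiles of such single-coordinate moves of `v` pins down its counts: all equal
(`C ⊆ All(pq,q)`), all at most one (`Inj(m,q)`), or `q = 2` with counts `k` and `k - 1`
(`W`). The last two codes are connected through single moves, which gives equality. If `v` is
constant, so are all codewords, and the diagonal element of `X` moving `(b,a,…,a)` to
`(c,a,…,a)` carries `(a,…,a)` or `(b,…,b)` to `(c,…,c)`. -/

open Finset Function Relation

lemma injective_update {ι β : Type*} [DecidableEq ι] {γ : ι → β} (hγ : Injective γ) (j : ι)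
    {b : β} (hb : b ∉ Set.range γ) : Injective (update γ j b) := by
  intro x y h
  simp only [update_apply] at h
  split_ifs at h with hx hy hy
  · exact hx.trans hy.symm
  · exact absurd ⟨y, h.symm⟩ hb
  · exact absurd ⟨x, h⟩ hb
  · exact hγ h

lemma range_update_const_subset {ι β : Type*} [DecidableEq ι] (a c : β) (i : ι) :
    Set.range (update (fun _ => a) i c) ⊆ {a, c} := by
  rintro _ ⟨l, rfl⟩
  simp only [update_apply]
  split_ifs <;> simp

section Counting

variable {I α : Type*} [Fintype I] {q : ℕ}

lemma card_filter_update [DecidableEq I] (f : I → α) (j : I) (b : α) (P : I → α → Prop)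
    [∀ i x, Decidable (P i x)] :
    (univ.filter fun i => P i (update f j b i)).card + (if P j (f j) then 1 else 0) =
      (univ.filter fun i => P i (f i)).card + (if P j b then 1 else 0) := by
  simp only [card_filter]
  rw [← add_sum_erase _ _ (mem_univ j), ← add_sum_erase _ _ (mem_univ j),
    sum_congr rfl fun i hi => by rw [update_of_ne (ne_of_mem_erase hi)], update_self]
  ring

lemma card_filter_comp_perm (e : Perm α) [Fintype α] (P : α → Prop) [DecidablePred P] :
    (univ.filter fun a => P (e a)).card = (univ.filter P).card := by
  simp only [card_filter]
  exact Equiv.sum_comp e fun a => if P a then 1 else 0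

lemma cnt_pos_iff {γ : I → Fin q} {a : Fin q} : 0 < cnt γ a ↔ ∃ i, γ i = a := by
  simp [cnt, card_pos, Finset.Nonempty]

lemma sum_cnt (γ : I → Fin q) : ∑ a, cnt γ a = Fintype.card I := by
  simpa [cnt] using (card_eq_sum_card_fiberwise (f := γ) (s := univ) (t := univ)
    fun i _ => mem_univ _).symm

lemma cnt_update [DecidableEq I] (β : I → Fin q) (j : I) (b c : Fin q) :
    cnt (update β j b) c + (if β j = c then 1 else 0) = cnt β c + (if b = c then 1 else 0) :=
  card_filter_update β j b fun _ x => x = c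

lemma cnt_eq_card_iff {γ : I → Fin q} {a : Fin q} :
    cnt γ a = Fintype.card I ↔ γ = fun _ => a := by
  rw [cnt, card_eq_iff_eq_univ, filter_eq_self, funext_iff]
  simp

lemma injective_iff_cnt_le_one {γ : I → Fin q} : Injective γ ↔ ∀ a, cnt γ a ≤ 1 := by
  simp only [cnt, card_le_one, mem_filter, mem_univ, true_and]
  exact ⟨fun h a i hi j hj => h (hi.trans hj.symm), fun h i j hij => h _ i hij j rfl⟩

lemma hammingDist_update [DecidableEq I] (γ δ : I → Fin q) (j : I) (b : Fin q) :
    hammingDist (update γ j b) δ + (if γ j ≠ δ j then 1 else 0) =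
      hammingDist γ δ + (if b ≠ δ j then 1 else 0) :=
  card_filter_update γ j b fun i x => x ≠ δ i

lemma hammingDist_update_self [DecidableEq I] {γ : I → Fin q} {j : I} {b : Fin q}
    (h : b ≠ γ j) : hammingDist (update γ j b) γ = 1 := by
  simpa [h] using hammingDist_update γ γ j b

end Counting

section Profile

variable {I : Type*} [Fintype I] {q : ℕ}

/-- The function `profile γ` carries the same information as the paper's `Num(γ)`. -/
def profile (γ : I → Fin q) (k : ℕ) : ℕ :=
  (univ.filter fun a => cnt γ a = k).card

lemma profile_pos_iff {γ : I → Fin q} {k : ℕ} : 0 < profile γ k ↔ ∃ a, cnt γ a = k := by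
  simp [profile, card_pos, Finset.Nonempty]

lemma exists_cnt_eq_of_profile_eq {γ δ : I → Fin q} (h : profile γ = profile δ) {a : Fin q} :
    ∃ b, cnt δ b = cnt γ a :=
  profile_pos_iff.mp (h ▸ profile_pos_iff.mpr ⟨a, rfl⟩)

lemma cnt_le_of_profile_eq {γ δ : I → Fin q} (h : profile γ = profile δ) {k : ℕ}
    (hk : ∀ a, cnt γ a ≤ k) (a : Fin q) : cnt δ a ≤ k := by
  obtain ⟨b, hb⟩ := exists_cnt_eq_of_profile_eq h.symm (a := a)
  exact hb ▸ hk b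

/-- Moving coordinate `j` from the letter `β j` to `b` replaces the counts `cnt β (β j)` and
`cnt β b` by `cnt β (β j) - 1` and `cnt β b + 1`. -/
lemma profile_update [DecidableEq I] (β : I → Fin q) (j : I) {b : Fin q} (hb : b ≠ β j)
    (k : ℕ) :
    profile (update β j b) k + (if cnt β (β j) = k then 1 else 0)
        + (if cnt β b = k then 1 else 0) =
      profile β k + (if cnt β (β j) - 1 = k then 1 else 0)
        + (if cnt β b + 1 = k then 1 else 0) := by
  have hcnt : cnt (update β j b) =
      update (update (cnt β) (β j) (cnt β (β j) - 1)) b (cnt β b + 1) := by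
    funext c
    have h := cnt_update β j b c
    rcases eq_or_ne c b with rfl | hcb
    · simp_all [Ne.symm hb]
    rcases eq_or_ne c (β j) with rfl | hcj
    · simp only [update_of_ne hcb, update_self, if_true, hb, if_false] at h ⊢
      omega
    · simp_all [Ne.symm hcb, Ne.symm hcj]
  have h₁ := card_filter_update (update (cnt β) (β j) (cnt β (β j) - 1)) b (cnt β b + 1)
    fun _ x => x = k
  have h₂ := card_filter_update (cnt β) (β j) (cnt β (β j) - 1) fun _ x => x = k
  simp only [update_of_ne hb] at h₁
  simp only [profile, hcnt]
  omega

lemma cnt_diagLHom_apply [DecidableEq I] (p : Perm (Fin q) × Perm I) (α : I → Fin q)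
    (a : Fin q) : cnt (diagLHom I q p α) a = cnt α (p.1⁻¹ a) := by
  have key : ∀ i, diagLHom I q p α i = a ↔ α (p.2⁻¹ i) = p.1⁻¹ a := fun i =>
    (Perm.eq_inv_iff_eq).symm
  simp only [cnt, key]
  exact card_filter_comp_perm p.2⁻¹ fun i => α i = p.1⁻¹ a

lemma profile_diagLHom_apply [DecidableEq I] (p : Perm (Fin q) × Perm I) (α : I → Fin q) :
    profile (diagLHom I q p α) = profile α := by
  funext k
  simp only [profile, cnt_diagLHom_apply]
  exact card_filter_comp_perm p.1⁻¹ fun a => cnt α a = k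

lemma range_diagLHom_apply [DecidableEq I] (p : Perm (Fin q) × Perm I) (α : I → Fin q) :
    Set.range (diagLHom I q p α) = p.1 '' Set.range α := by
  ext a
  constructor
  · rintro ⟨i, rfl⟩
    exact ⟨α (p.2⁻¹ i), ⟨_, rfl⟩, rfl⟩
  · rintro ⟨_, ⟨i, rfl⟩, rfl⟩
    exact ⟨p.2 i, by simp [diagLHom, tvp]⟩

end Profile

section Orbits

variable {I : Type*} {q : ℕ} {X : Subgroup (Perm (I → Fin q))} {S : Set (I → Fin q)}

lemma IsOrbitOf.nonempty (hS : IsOrbitOf X S) : S.Nonempty := by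
  obtain ⟨v, rfl⟩ := hS
  exact ⟨v, 1, X.one_mem, rfl⟩

lemma IsOrbitOf.apply_mem (hS : IsOrbitOf X S) {x : Perm (I → Fin q)} (hx : x ∈ X)
    {α : I → Fin q} (hα : α ∈ S) : x α ∈ S := by
  obtain ⟨v, rfl⟩ := hS
  obtain ⟨y, hy, rfl⟩ := hα
  exact ⟨x * y, X.mul_mem hx hy, rfl⟩

lemma IsOrbitOf.exists_apply_eq (hS : IsOrbitOf X S) {α β : I → Fin q} (hα : α ∈ S)
    (hβ : β ∈ S) : ∃ x ∈ X, x α = β := by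
  obtain ⟨v, rfl⟩ := hS
  obtain ⟨y, hy, rfl⟩ := hα
  obtain ⟨z, hz, rfl⟩ := hβ
  exact ⟨z * y⁻¹, X.mul_mem hz (X.inv_mem hy), by simp⟩

lemma IsOrbitOf.profile_eq [Fintype I] [DecidableEq I] (hXd : X ≤ diagL I q)
    (hS : IsOrbitOf X S) {α β : I → Fin q} (hα : α ∈ S) (hβ : β ∈ S) :
    profile α = profile β := by
  obtain ⟨x, hx, rfl⟩ := hS.exists_apply_eq hα hβ
  obtain ⟨p, rfl⟩ := hXd hx
  exact (profile_diagLHom_apply p α).symm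

end Orbits

section NeighbourTransitive

variable {I : Type*} [Fintype I] {q : ℕ} {C : Set (I → Fin q)}

def HasConstantProfiles (C : Set (I → Fin q)) : Prop :=
  (∀ β ∈ C, ∀ β' ∈ C, profile β = profile β') ∧
    ∀ ν ∈ cell C 1, ∀ ν' ∈ cell C 1, profile ν = profile ν'

lemma DiagNbrTransitive.hasConstantProfiles [DecidableEq I] {X : Subgroup (Perm (I → Fin q))}
    (h : DiagNbrTransitive X C) : HasConstantProfiles C :=
  ⟨fun _ hβ _ hβ' => h.1.2.1.profile_eq h.2 hβ hβ',
    fun _ hν _ hν' => h.1.2.2.profile_eq h.2 hν hν'⟩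

lemma mem_or_mem_cell_one {β γ : I → Fin q} (hβ : β ∈ C) (h : hammingDist γ β = 1) :
    γ ∈ C ∨ γ ∈ cell C 1 := by
  have hne : {d | ∃ β ∈ C, hammingDist γ β = d}.Nonempty := ⟨1, β, hβ, h⟩
  have hle : distC γ C ≤ 1 := h ▸ Nat.sInf_le ⟨β, hβ, rfl⟩
  interval_cases hd : distC γ C
  · have hmem : distC γ C ∈ {d | ∃ β ∈ C, hammingDist γ β = d} := Nat.sInf_mem hne
    rw [hd] at hmem
    obtain ⟨β', hβ', h0⟩ := hmem
    exact .inl (hammingDist_eq_zero.mp h0 ▸ hβ')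
  · exact .inr hd

end NeighbourTransitive

section MaximalCount

variable {I : Type*} [Fintype I] [DecidableEq I] {q : ℕ} {C : Set (I → Fin q)}
  {v : I → Fin q} {k : ℕ} {b : Fin q} {j : I}

lemma update_mem_cell_one_of_cnt_eq_max (hC : HasConstantProfiles C) (hv : v ∈ C)
    (hk : ∀ a, cnt v a ≤ k) (hb : cnt v b = k) (hj : v j ≠ b) : update v j b ∈ cell C 1 := by
  refine (mem_or_mem_cell_one hv (hammingDist_update_self hj.symm)).resolve_left fun h => ?_
  have := cnt_le_of_profile_eq (hC.1 v hv _ h) hk b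
  have := cnt_update v j b b
  simp only [hj, if_false, if_true] at this
  omega

/-- The vertices at distance one from `C` share the profile of `update v j b`, which has a
count `k + 1`. -/
lemma mem_of_hammingDist_eq_one_of_cnt_le (hC : HasConstantProfiles C) (hv : v ∈ C)
    (hk : ∀ a, cnt v a ≤ k) (hb : cnt v b = k) (hj : v j ≠ b) {β γ : I → Fin q} (hβ : β ∈ C)
    (hγβ : hammingDist γ β = 1) (hγ : ∀ a, cnt γ a ≤ k) : γ ∈ C := by
  refine (mem_or_mem_cell_one hβ hγβ).resolve_right fun h => ?_
  have hν := update_mem_cell_one_of_cnt_eq_max hC hv hk hb hj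
  have := cnt_le_of_profile_eq (hC.2 γ h _ hν) hγ b
  have := cnt_update v j b b
  simp only [hj, if_false, if_true] at this
  omega

lemma cnt_eq_cnt_add_one_of_lt (hC : HasConstantProfiles C) (hv : v ∈ C)
    (hk : ∀ a, cnt v a ≤ k) (hb : cnt v b = k) (hj : v j ≠ b) {a c : Fin q} (hac : a ≠ c)
    (ha : 0 < cnt v a) (hc : cnt v c < k) : cnt v a = cnt v c + 1 := by
  obtain ⟨i, rfl⟩ := cnt_pos_iff.mp ha
  have hν : update v i c ∈ C := by
    refine mem_of_hammingDist_eq_one_of_cnt_le hC hv hk hb hj hv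
      (hammingDist_update_self hac.symm) fun d => ?_
    have h := cnt_update v i c d
    rcases eq_or_ne c d with rfl | hcd
    · simp only [hac, if_false, if_true] at h
      omega
    · have := hk d
      simp only [hcd, if_false] at h
      omega
  have hprof := congrFun (hC.1 _ hν v hv) (cnt v (v i) - 1)
  have := profile_update v i hac.symm (cnt v (v i) - 1)
  split_ifs at this <;> omega

lemma cnt_apply_eq_of_cnt_eq_max (hC : HasConstantProfiles C) (hv : v ∈ C)
    (hk : ∀ a, cnt v a ≤ k) {b' : Fin q} {j' : I} (hb : cnt v b = k) (hb' : cnt v b' = k)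
    (hj : v j ≠ b) (hj' : v j' ≠ b') : cnt v (v j) = cnt v (v j') := by
  have hprof := congrFun (hC.2 _ (update_mem_cell_one_of_cnt_eq_max hC hv hk hb hj) _
    (update_mem_cell_one_of_cnt_eq_max hC hv hk hb' hj')) (cnt v (v j) - 1)
  have := profile_update v j hj.symm (cnt v (v j) - 1)
  have := profile_update v j' hj'.symm (cnt v (v j) - 1)
  have : 0 < cnt v (v j) := cnt_pos_iff.mpr ⟨j, rfl⟩
  have : 0 < cnt v (v j') := cnt_pos_iff.mpr ⟨j', rfl⟩
  split_ifs at * <;> omega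

end MaximalCount

section Connectivity

variable {I : Type*} [Fintype I] {q : ℕ}

def AdjInto (D : Set (I → Fin q)) (β γ : I → Fin q) : Prop :=
  γ ∈ D ∧ hammingDist β γ = 1

lemma subset_of_descent {C D : Set (I → Fin q)} {v : I → Fin q} (hv : v ∈ C)
    (hclosed : ∀ β ∈ C, ∀ γ, AdjInto D β γ → γ ∈ C)
    (hdesc : ∀ γ ∈ D, γ ≠ v → ∃ γ' ∈ D,
      hammingDist γ' v < hammingDist γ v ∧ ReflTransGen (AdjInto D) γ' γ) :
    D ⊆ C := by
  have hchain : ∀ {β γ}, ReflTransGen (AdjInto D) β γ → β ∈ C → γ ∈ C := fun h hβ => by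
    induction h with
    | refl => exact hβ
    | tail _ hstep ih => exact hclosed _ ih _ hstep
  intro γ hγ
  induction hn : hammingDist γ v using Nat.strong_induction_on generalizing γ with
  | _ n ih =>
    obtain rfl | hγv := eq_or_ne γ v
    · exact hv
    obtain ⟨γ', hγ', hlt, hγ'γ⟩ := hdesc γ hγ hγv
    exact hchain hγ'γ (ih _ (hn ▸ hlt) hγ' rfl)

lemma hammingDist_update_lt [DecidableEq I] {γ v : I → Fin q} {i : I} (hi : γ i ≠ v i) :
    hammingDist (update γ i (v i)) v < hammingDist γ v := by
  have := hammingDist_update γ v i (v i)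
  simp only [hi, ne_eq, not_true_eq_false, not_false_eq_true, if_true, if_false] at this
  omega

/-- Fix a wrong coordinate `i` of `γ`; if the letter `v i` is already used by `γ` at `i'`,
first move `i'` to a letter missing from `γ`, which exists since `|I| < q`. -/
lemma exists_injective_closer [DecidableEq I] (hq : Fintype.card I < q) {v γ : I → Fin q}
    (hv : Injective v) (hγ : Injective γ) (hγv : γ ≠ v) : ∃ γ' ∈ injCode I q,
      hammingDist γ' v < hammingDist γ v ∧ ReflTransGen (AdjInto (injCode I q)) γ' γ := by
  obtain ⟨i, hi⟩ : ∃ i, γ i ≠ v i := not_forall.mp fun h => hγv (funext h)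
  by_cases hused : v i ∈ Set.range γ
  · obtain ⟨i', hi'⟩ := hused
    have hii' : i' ≠ i := by
      rintro rfl
      exact hi hi'
    obtain ⟨e, he⟩ : ∃ e, e ∉ Set.range γ := by
      by_contra! hsurj
      have := Fintype.card_le_of_surjective γ fun e => hsurj e
      simp only [Fintype.card_fin] at this
      omega
    have hγ₂ : Injective (update γ i' e) := injective_update hγ i' he
    have hused₂ : v i ∉ Set.range (update γ i' e) := by
      rintro ⟨l, hl⟩
      rcases eq_or_ne l i' with rfl | hl'
      · exact he ⟨l, by rw [update_self] at hl; rw [hl, hi']⟩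
      · rw [update_of_ne hl'] at hl
        exact hl' (hγ (hl.trans hi'.symm))
    have hi₂ : update γ i' e i ≠ v i := by rwa [update_of_ne hii'.symm]
    have hle : hammingDist (update γ i' e) v ≤ hammingDist γ v := by
      have := hammingDist_update γ v i' e
      have : γ i' ≠ v i' := hi' ▸ hv.ne hii'.symm
      split_ifs at * <;> omega
    refine ⟨_, injective_update hγ₂ i hused₂, (hammingDist_update_lt hi₂).trans_le hle, ?_⟩
    exact .head ⟨hγ₂, hammingDist_update_self hi₂.symm⟩
      (.single ⟨hγ, hammingDist_update_self fun h => he ⟨i', h.symm⟩⟩)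
  · exact ⟨_, injective_update hγ i hused, hammingDist_update_lt hi,
      .single ⟨hγ, hammingDist_update_self (Ne.symm hi)⟩⟩

variable {A B : Fin q}

lemma univ_eq_pair (hcover : ∀ a, a = A ∨ a = B) : (univ : Finset (Fin q)) = {A, B} := by
  ext a
  simpa using hcover a

lemma cnt_add_cnt_eq_card (hAB : A ≠ B) (hcover : ∀ a, a = A ∨ a = B) (γ : I → Fin q) :
    cnt γ A + cnt γ B = Fintype.card I := by
  rw [← sum_cnt γ, univ_eq_pair hcover, sum_pair hAB]

lemma exists_eq_ne_of_cnt_le (hcover : ∀ a, a = A ∨ a = B) {γ δ : I → Fin q} (hne : γ ≠ δ)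
    (h : cnt δ A ≤ cnt γ A) : ∃ i, γ i = A ∧ δ i ≠ A := by
  by_contra! hsub
  have heq : univ.filter (fun i => γ i = A) = univ.filter (fun i => δ i = A) :=
    eq_of_subset_of_card_le (fun i => by simpa using hsub i) h
  refine hne (funext fun i => ?_)
  have hi : γ i = A ↔ δ i = A := by simpa using Finset.ext_iff.mp heq i
  rcases hcover (γ i) with h1 | h1 <;> rcases hcover (δ i) with h2 | h2 <;> simp_all

end Connectivity

section Codes

variable {I : Type*} [Fintype I] {q : ℕ} {C : Set (I → Fin q)} {v : I → Fin q}

lemma subset_allCode [DecidableEq I] (hC : HasConstantProfiles C) (hv : v ∈ C) {p : ℕ}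
    (hall : ∀ a, cnt v a = p) : C ⊆ allCode I q p := by
  intro β hβ a
  have hvp : profile v p = q := by simp [profile, hall]
  have hβp : (univ.filter fun a => cnt β a = p).card = (univ : Finset (Fin q)).card := by
    rw [card_univ, Fintype.card_fin]
    exact (congrFun (hC.1 v hv β hβ) p).symm.trans hvp
  exact card_filter_eq_iff.mp hβp a (mem_univ a)

lemma eq_injCode [DecidableEq I] (hC : HasConstantProfiles C) (hv : v ∈ C)
    (hvinj : Injective v) {j j' : I} (hjj' : j ≠ j') (hq : Fintype.card I < q) :
    C = injCode I q := by
  have hk : ∀ a, cnt v a ≤ 1 := injective_iff_cnt_le_one.mp hvinj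
  have hb : cnt v (v j') = 1 := le_antisymm (hk _) (cnt_pos_iff.mpr ⟨j', rfl⟩)
  refine Set.Subset.antisymm (fun β hβ => injective_iff_cnt_le_one.mpr
    (cnt_le_of_profile_eq (hC.1 v hv β hβ) hk)) ?_
  refine subset_of_descent hv (fun β hβ γ ⟨hγ, hγβ⟩ => ?_)
    fun γ hγ hγv => exists_injective_closer hq hvinj hγ hγv
  exact mem_of_hammingDist_eq_one_of_cnt_le hC hv hk hb (hvinj.ne hjj') hβ
    (hammingDist_comm β γ ▸ hγβ) (injective_iff_cnt_le_one.mp hγ)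

lemma eq_const_of_mem (hC : HasConstantProfiles C) {a : Fin q} (ha : (fun _ => a) ∈ C)
    {β : I → Fin q} (hβ : β ∈ C) : ∃ c, β = fun _ => c := by
  obtain ⟨c, hc⟩ := exists_cnt_eq_of_profile_eq (hC.1 _ ha β hβ) (a := a)
  exact ⟨c, cnt_eq_card_iff.mp (hc.trans (cnt_eq_card_iff.mpr rfl))⟩

variable [DecidableEq I]

lemma update_const_mem_cell_one [Nontrivial I] (hC : HasConstantProfiles C) {a c : Fin q}
    (ha : (fun _ => a) ∈ C) (hc : c ≠ a) (i : I) : update (fun _ => a) i c ∈ cell C 1 := by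
  refine (mem_or_mem_cell_one ha (hammingDist_update_self hc)).resolve_left fun h => ?_
  obtain ⟨d, hd⟩ := eq_const_of_mem hC ha h
  obtain ⟨i', hi'⟩ := exists_ne i
  have hi := congrFun hd i
  have hi'' := congrFun hd i'
  simp only [update_self, update_of_ne hi'] at hi hi''
  exact hc (hi.trans hi''.symm)

/-- The element of `X` moving the neighbour `(b,a,…,a)` of `(a,…,a)` to `(c,a,…,a)` is diagonal,
so its letter permutation sends `a` or `b` to `c`, and hence `(a,…,a)` or `(b,…,b)` to
`(c,…,c)`. -/
theorem eq_singleton_or_eq_repCode [Nontrivial I] {X : Subgroup (Perm (I → Fin q))}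
    (hX : DiagNbrTransitive X C) {a : Fin q} (ha : (fun _ => a) ∈ C) :
    C = {fun _ => a} ∨ C = repCode I q := by
  have hC := hX.hasConstantProfiles
  by_cases h : ∃ b ≠ a, (fun _ => b) ∈ C
  · right
    obtain ⟨b, hba, hb⟩ := h
    refine Set.Subset.antisymm (fun β hβ => eq_const_of_mem hC ha hβ) ?_
    rintro _ ⟨c, rfl⟩
    obtain rfl | hca := eq_or_ne c a
    · exact ha
    have i : I := Classical.arbitrary I
    obtain ⟨x, hx, hxν⟩ := hX.1.2.2.exists_apply_eq (update_const_mem_cell_one hC ha hba i)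
      (update_const_mem_cell_one hC ha hca i)
    obtain ⟨p, rfl⟩ := hX.2 hx
    have hc : c ∈ Set.range (diagLHom I q p (update (fun _ => a) i b)) :=
      hxν ▸ ⟨i, update_self ..⟩
    rw [range_diagLHom_apply] at hc
    obtain ⟨d, hd, rfl⟩ := Set.image_mono (range_update_const_subset a b i) hc
    have hdC : (fun _ => d) ∈ C := by rcases hd with rfl | rfl <;> assumption
    exact hX.1.2.1.apply_mem hx hdC
  · left
    push Not at h
    refine Set.Subset.antisymm (fun β hβ => ?_) (Set.singleton_subset_iff.mpr ha)
    obtain ⟨c, rfl⟩ := eq_const_of_mem hC ha hβ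
    by_contra hne
    exact h c (fun hca => hne (hca ▸ rfl)) hβ

end Codes

section BinaryCode

variable {m q : ℕ} {A B : Fin q}

lemma mem_wCodeGen_iff (hAB : A ≠ B) (hcover : ∀ a, a = A ∨ a = B) {k : ℕ}
    (hmk : m + 1 = 2 * k) {γ : Fin m → Fin q} :
    γ ∈ wCodeGen m q ↔ cnt γ A = k ∨ cnt γ A + 1 = k := by
  have hsum := cnt_add_cnt_eq_card hAB hcover γ
  rw [Fintype.card_fin] at hsum
  constructor
  · rintro ⟨a, b, hab, ha, hb⟩
    rcases hcover a with rfl | rfl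
    · omega
    · rcases hcover b with rfl | rfl
      · omega
      · exact absurd rfl hab
  · rintro (h | h)
    · exact ⟨A, B, hAB, by omega, by omega⟩
    · exact ⟨B, A, hAB.symm, by omega, by omega⟩

lemma cnt_le_of_mem_wCodeGen (hAB : A ≠ B) (hcover : ∀ a, a = A ∨ a = B) {k : ℕ}
    (hmk : m + 1 = 2 * k) {γ : Fin m → Fin q} (hγ : γ ∈ wCodeGen m q) (a : Fin q) :
    cnt γ a ≤ k := by
  have hsum := cnt_add_cnt_eq_card hAB hcover γ
  rw [Fintype.card_fin] at hsum
  have := (mem_wCodeGen_iff hAB hcover hmk).mp hγ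
  rcases hcover a with rfl | rfl <;> omega

lemma exists_wCodeGen_closer (hAB : A ≠ B) (hcover : ∀ a, a = A ∨ a = B) {k : ℕ}
    (hmk : m + 1 = 2 * k) {v γ : Fin m → Fin q} (hv : v ∈ wCodeGen m q)
    (hγ : γ ∈ wCodeGen m q) (hγv : γ ≠ v) : ∃ γ' ∈ wCodeGen m q,
      hammingDist γ' v < hammingDist γ v ∧ ReflTransGen (AdjInto (wCodeGen m q)) γ' γ := by
  have hvA := (mem_wCodeGen_iff hAB hcover hmk).mp hv
  obtain ⟨i, hi, hmem⟩ : ∃ i, γ i ≠ v i ∧ update γ i (v i) ∈ wCodeGen m q := by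
    simp only [mem_wCodeGen_iff hAB hcover hmk] at hγ ⊢
    rcases hγ with hγA | hγA
    · obtain ⟨i, hγi, hvi⟩ := exists_eq_ne_of_cnt_le hcover hγv (by omega)
      have := cnt_update γ i (v i) A
      simp only [hγi, hvi, if_true, if_false] at this
      exact ⟨i, hγi ▸ hvi.symm, by omega⟩
    · obtain ⟨i, hvi, hγi⟩ := exists_eq_ne_of_cnt_le hcover hγv.symm (by omega)
      have := cnt_update γ i A A
      simp only [hγi, if_true, if_false] at this
      exact ⟨i, hvi ▸ hγi, by rw [hvi]; omega⟩
  exact ⟨_, hmem, hammingDist_update_lt hi, .single ⟨hγ, hammingDist_update_self (Ne.symm hi)⟩⟩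

lemma eq_wCodeGen {C : Set (Fin m → Fin q)} (hC : HasConstantProfiles C) {v : Fin m → Fin q}
    (hv : v ∈ C) (hAB : A ≠ B) (hcover : ∀ a, a = A ∨ a = B) {k : ℕ} (hvA : cnt v A = k)
    (hvB : cnt v B + 1 = k) (hB : 0 < cnt v B) : C = wCodeGen m q := by
  have hmk : m + 1 = 2 * k := by
    have := cnt_add_cnt_eq_card hAB hcover v
    rw [Fintype.card_fin] at this
    omega
  have hk : ∀ a, cnt v a ≤ k := fun a => by rcases hcover a with rfl | rfl <;> omega
  obtain ⟨j, hj⟩ := cnt_pos_iff.mp hB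
  have hvW : v ∈ wCodeGen m q := (mem_wCodeGen_iff hAB hcover hmk).mpr (.inl hvA)
  refine Set.Subset.antisymm (fun β hβ => ?_) ?_
  · obtain ⟨a, ha⟩ := exists_cnt_eq_of_profile_eq (hC.1 v hv β hβ) (a := A)
    obtain ⟨b, hb⟩ := exists_cnt_eq_of_profile_eq (hC.1 v hv β hβ) (a := B)
    exact ⟨a, b, by rintro rfl; omega, by omega, by omega⟩
  refine subset_of_descent hv (fun β hβ γ ⟨hγ, hγβ⟩ => ?_)
    fun γ hγ hγv => exists_wCodeGen_closer hAB hcover hmk hvW hγ hγv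
  exact mem_of_hammingDist_eq_one_of_cnt_le hC hv hk hvA (hj ▸ hAB.symm) hβ
    (hammingDist_comm β γ ▸ hγβ) (cnt_le_of_mem_wCodeGen hAB hcover hmk hγ)

end BinaryCode

/-- A letter `c` of count below the maximum `k` forces every other occurring letter to have
count `cnt v c + 1`, and two letters of count `k - 1` and `k` moved onto a letter of count `k`
would give two profiles at distance one, so there is no third letter. -/
theorem classification_of_nonconstant_codeword {m q : ℕ} {C : Set (Fin m → Fin q)}
    (hC : HasConstantProfiles C) {v : Fin m → Fin q} (hv : v ∈ C) {i i' : Fin m}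
    (hii' : v i ≠ v i') :
    (m < q ∧ C = injCode (Fin m) q) ∨ (q = 2 ∧ 3 ≤ m ∧ Odd m ∧ C = wCodeGen m q) ∨
      (∃ p : ℕ, 0 < p ∧ m = p * q ∧ C ⊆ allCode (Fin m) q p) := by
  obtain ⟨A, -, hA⟩ := exists_max_image univ (cnt v) ⟨v i, mem_univ _⟩
  obtain ⟨k, hAk⟩ : ∃ k, cnt v A = k := ⟨_, rfl⟩
  have hk : ∀ a, cnt v a ≤ k := fun a => hAk ▸ hA a (mem_univ a)
  obtain ⟨j, hj⟩ : ∃ j, v j ≠ A := by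
    by_contra! h
    exact hii' ((h i).trans (h i').symm)
  have hkpos : 0 < k := (cnt_pos_iff.mpr ⟨j, rfl⟩).trans_le (hk _)
  have rigid := fun {a c : Fin q} => cnt_eq_cnt_add_one_of_lt hC hv hk hAk hj (a := a) (c := c)
  by_cases habsent : ∃ c, cnt v c = 0
  · obtain ⟨c, hc⟩ := habsent
    have hk1 : k = 1 := by
      have := rigid (a := A) (c := c) (by rintro rfl; omega) (by omega) (by omega)
      omega
    have hvinj : Injective v := injective_iff_cnt_le_one.mpr (hk1 ▸ hk)
    have hmq : m < q := by
      have hc' : c ∉ Set.range v := fun h => by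
        have := cnt_pos_iff.mpr h
        omega
      simpa using Fintype.card_lt_of_injective_of_notMem v hvinj hc'
    exact .inl ⟨hmq, eq_injCode hC hv hvinj (ne_of_apply_ne v hii') (by simpa using hmq)⟩
  push Not at habsent
  by_cases hall : ∀ a, cnt v a = k
  · refine .inr (.inr ⟨k, hkpos, ?_, subset_allCode hC hv hall⟩)
    have := sum_cnt v
    simp only [hall, sum_const, card_univ, Fintype.card_fin, smul_eq_mul] at this
    rw [← this, mul_comm]
  push Not at hall
  obtain ⟨B, hB⟩ := hall
  have hAB : A ≠ B := by
    rintro rfl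
    exact hB hAk
  have hBk : cnt v B + 1 = k :=
    (rigid hAB (by omega) (lt_of_le_of_ne (hk B) hB)).symm.trans hAk
  have hcover : ∀ a, a = A ∨ a = B := by
    by_contra! h
    obtain ⟨a, haA, haB⟩ := h
    obtain ⟨l, rfl⟩ := cnt_pos_iff.mp (Nat.pos_of_ne_zero (habsent a))
    obtain ⟨l', hl'⟩ := cnt_pos_iff.mp (Nat.pos_of_ne_zero (habsent B))
    have h₁ := cnt_apply_eq_of_cnt_eq_max hC hv hk hAk hAk haA (hl' ▸ hAB.symm)
    have h₂ := rigid haB (Nat.pos_of_ne_zero (habsent _)) (by omega)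
    rw [hl'] at h₁
    omega
  have hq2 : q = 2 := by
    simpa [card_pair hAB] using congrArg Finset.card (univ_eq_pair hcover)
  have hm := cnt_add_cnt_eq_card hAB hcover v
  rw [Fintype.card_fin] at hm
  have hB0 : 0 < cnt v B := Nat.pos_of_ne_zero (habsent B)
  exact .inr (.inl ⟨hq2, by omega, ⟨cnt v B, by omega⟩,
    eq_wCodeGen hC hv hAB hcover hAk hBk hB0⟩)

theorem diag_neighbour_transitive_classification_general {m q : ℕ} (hm : 2 ≤ m)
    (C : Set (Fin m → Fin q)) (X : Subgroup (Equiv.Perm (Fin m → Fin q)))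
    (hX : DiagNbrTransitive X C) :
    (∃ a : Fin q, C = {fun _ => a}) ∨
    C = repCode (Fin m) q ∨
    (m < q ∧ C = injCode (Fin m) q) ∨
    (q = 2 ∧ 3 ≤ m ∧ Odd m ∧ C = wCodeGen m q) ∨
    (∃ p : ℕ, 0 < p ∧ m = p * q ∧ C ⊆ allCode (Fin m) q p) := by
  obtain ⟨v, hv⟩ := hX.1.2.1.nonempty
  by_cases hnc : ∃ i i', v i ≠ v i'
  · obtain ⟨i, i', hii'⟩ := hnc
    exact .inr (.inr (classification_of_nonconstant_codeword hX.hasConstantProfiles hv hii'))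
  push Not at hnc
  have : Nontrivial (Fin m) := Fin.nontrivial_iff_two_le.mpr hm
  have hva : v = fun _ => v ⟨0, by omega⟩ := funext fun i => hnc i _
  rw [hva] at hv
  rcases eq_singleton_or_eq_repCode hX hv with h | h
  · exact .inl ⟨_, h⟩
  · exact .inr (.inl h)

/-- Theorem 4.3: classification of diagonally `X`-neighbour
transitive codes in `H(m,q)`. -/
theorem diag_neighbour_transitive_classification {m q : ℕ} (hm : 2 ≤ m) (hq : 2 ≤ q)
    (C : Set (Fin m → Fin q)) (X : Subgroup (Equiv.Perm (Fin m → Fin q)))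
    (hX : DiagNbrTransitive X C) :
    (∃ a : Fin q, C = {fun _ => a}) ∨
    C = repCode (Fin m) q ∨
    (m < q ∧ C = injCode (Fin m) q) ∨
    (q = 2 ∧ 3 ≤ m ∧ Odd m ∧ C = wCodeGen m q) ∨
    (∃ p : ℕ, 0 < p ∧ m = p * q ∧ C ⊆ allCode (Fin m) q p) :=
  diag_neighbour_transitive_classification_general hm C X hX
end

section
/- Let q ≥ 2 and let T be a subset of S_q, with C(T) = {α(t) : t ∈ T} the permutation code generated by T in H(q,q). Then C(T) is 1-regular with minimum distance δ = 2 if and only if T = S_q. -/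
open Equiv Pointwise

/-! Since `d(α(σ), α(τ)) = |supp(σ⁻¹τ)|`, distinct codewords of a permutation code are at
distance at least `2`, and codewords at distance `2` differ by a transposition on the right.
If `C(T)` has minimum distance `2`, then `t, t (x₀ y₀) ∈ T` for some `t`, and the vertex
obtained from `α(t)` by writing `t y₀` into position `x₀` lies at distance `1` from exactly
these two codewords. For `s ∈ T` and `x ≠ y`, the analogous vertex built from `s` can only be
adjacent to `α(s)` and `α(s (x y))`, so `1`-regularity forces `s (x y) ∈ T`; as the
transpositions generate `S_q`, `T = S_q`. Conversely, the isometries `β ↦ g ∘ β ∘ σ` preserve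
`C(S_q)` and act transitively both on it and on the vertices at distance `1` from it. -/

open Finset Function

section HammingLemmas

variable {ι β : Type*} [Fintype ι] [DecidableEq β]

theorem hammingDist_eq_one_iff {f g : ι → β} :
    hammingDist f g = 1 ↔ ∃ j, f j ≠ g j ∧ ∀ i, i ≠ j → f i = g i := by
  simp only [hammingDist, Finset.card_eq_one, Finset.eq_singleton_iff_unique_mem,
    Finset.mem_filter, Finset.mem_univ, true_and]
  refine exists_congr fun j => and_congr_right fun _ => forall_congr' fun i => ?_
  rw [← not_imp_not, not_not]

theorem hammingDist_update_self_s18 [DecidableEq ι] (f : ι → β) {a : ι} {b : β} (hb : b ≠ f a) :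
    hammingDist (update f a b) f = 1 :=
  hammingDist_eq_one_iff.2 ⟨a, by simpa using hb, fun i hi => update_of_ne hi b f⟩

theorem hammingDist_comp_equiv (σ : Equiv.Perm ι) (f g : ι → β) :
    hammingDist (f ∘ σ) (g ∘ σ) = hammingDist f g := by
  simp only [hammingDist]
  exact Finset.card_equiv σ (by simp)

end HammingLemmas

namespace Equiv.Perm

theorem exists_apply_eq_apply_eq {α : Type*} [DecidableEq α] {x₁ x₂ y₁ y₂ : α}
    (hx : x₁ ≠ x₂) (hy : y₁ ≠ y₂) : ∃ g : Perm α, g x₁ = y₁ ∧ g x₂ = y₂ := by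
  refine ⟨swap (swap x₁ y₁ x₂) y₂ * swap x₁ y₁, ?_, by simp⟩
  rw [mul_apply, swap_apply_left, swap_apply_of_ne_of_ne _ hy]
  rw [Ne, eq_comm, swap_apply_eq_iff, swap_apply_right]
  exact hx.symm

variable {α : Type*} [Fintype α] [DecidableEq α]

theorem hammingDist_eq_card_support (σ τ : Perm α) :
    hammingDist ⇑σ ⇑τ = #(σ⁻¹ * τ).support := by
  simp only [hammingDist, support, mul_apply, ne_eq, eq_inv_iff_eq, eq_comm]

theorem two_le_hammingDist {σ τ : Perm α} (hne : σ ≠ τ) : 2 ≤ hammingDist ⇑σ ⇑τ := by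
  rw [hammingDist_eq_card_support]
  have h0 : #(σ⁻¹ * τ).support ≠ 0 := by
    rwa [Ne, card_support_eq_zero, inv_mul_eq_one]
  have := card_support_ne_one (σ⁻¹ * τ)
  omega

theorem eq_of_forall_ne_apply_eq {σ τ : Perm α} (a : α) (h : ∀ i, i ≠ a → σ i = τ i) :
    σ = τ := by
  by_contra hne
  have := two_le_hammingDist hne
  have : hammingDist ⇑σ ⇑τ ≤ 1 := by
    simp only [hammingDist]
    refine Finset.card_le_one.2 fun i hi j hj => ?_
    simp only [Finset.mem_filter, Finset.mem_univ, true_and] at hi hj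
    rw [not_imp_comm.1 (h i) hi, not_imp_comm.1 (h j) hj]
  omega

theorem exists_eq_mul_swap_of_hammingDist_eq_two {σ τ : Perm α}
    (h : hammingDist ⇑σ ⇑τ = 2) : ∃ x y, x ≠ y ∧ τ = σ * swap x y := by
  rw [hammingDist_eq_card_support, card_support_eq_two] at h
  obtain ⟨x, y, hxy, hswap⟩ := h
  exact ⟨x, y, hxy, by rw [← hswap, mul_inv_cancel_left]⟩

theorem eq_univ_of_mul_swap_mem {T : Set (Perm α)} {t : Perm α} (ht : t ∈ T)
    (hT : ∀ s ∈ T, ∀ x y, x ≠ y → s * swap x y ∈ T) : T = _root_.Set.univ := by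
  refine Set.eq_univ_of_forall fun f => ?_
  rw [← mul_inv_cancel_left t f]
  induction t⁻¹ * f using swap_induction_on' with
  | one => rwa [mul_one]
  | mul_swap g x y hxy ih => rw [← mul_assoc]; exact hT _ ih x y hxy

theorem ncard_hammingDist_comp (γ : α → α) (g σ : Perm α) (k : ℕ) :
    {h : Perm α | hammingDist (g ∘ γ ∘ σ) ⇑h = k}.ncard =
      {h : Perm α | hammingDist γ ⇑h = k}.ncard := by
  have hdist (h : Perm α) : hammingDist (g ∘ γ ∘ σ) ⇑(g * h * σ) = hammingDist γ ⇑h :=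
    (hammingDist_comp_equiv σ (g ∘ γ) (g ∘ h)).trans
      (hammingDist_comp (fun _ => g) fun _ => g.injective)
  refine Set.ncard_congr (fun h _ => g⁻¹ * h * σ⁻¹) (fun h hh => ?_) (fun _ _ _ _ e => ?_)
    fun h hh => ⟨g * h * σ, (hdist h).trans hh, by group⟩
  · have := hdist (g⁻¹ * h * σ⁻¹)
    rw [show g * (g⁻¹ * h * σ⁻¹) * σ = h by group] at this
    exact this.symm.trans hh
  · simpa using e

theorem hammingDist_update_eq_one_iff {s h : Perm α} {x y : α} (hxy : x ≠ y) :
    hammingDist (update ⇑s x (s y)) ⇑h = 1 ↔ h = s ∨ h = s * swap x y := by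
  have hswap (i : α) (hi : i ≠ y) : update (⇑s) x (s y) i = (s * swap x y) i := by
    rcases eq_or_ne i x with rfl | hix
    · simp
    · rw [update_of_ne hix, mul_apply, swap_apply_of_ne_of_ne hix hi]
  constructor
  · rw [hammingDist_eq_one_iff]
    rintro ⟨j, -, hoff⟩
    rcases eq_or_ne j x with rfl | hjx
    · exact .inl (eq_of_forall_ne_apply_eq j fun i hi => (hoff i hi).symm.trans
        (update_of_ne hi _ _))
    rcases eq_or_ne j y with rfl | hjy
    · exact .inr (eq_of_forall_ne_apply_eq j fun i hi => (hoff i hi).symm.trans (hswap i hi))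
    have hx := hoff x hjx.symm
    have hy := hoff y hjy.symm
    rw [update_self] at hx
    rw [update_of_ne hxy.symm] at hy
    exact absurd (h.injective (hx.symm.trans hy)) hxy
  · rintro (rfl | rfl)
    · exact hammingDist_update_self_s18 _ (h.injective.ne hxy.symm)
    · refine hammingDist_eq_one_iff.2 ⟨y, ?_, hswap⟩
      simpa [update_of_ne hxy.symm] using s.injective.ne hxy.symm

theorem exists_comp_eq_of_hammingDist_eq_one {γ γ' : α → α} {β β' : Perm α}
    (h : hammingDist γ ⇑β = 1) (h' : hammingDist γ' ⇑β' = 1) :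
    ∃ g σ : Perm α, γ' = g ∘ γ ∘ σ := by
  obtain ⟨a, ha, hoff⟩ := hammingDist_eq_one_iff.1 h
  obtain ⟨a', ha', hoff'⟩ := hammingDist_eq_one_iff.1 h'
  obtain ⟨g, hgβ, hgγ⟩ := exists_apply_eq_apply_eq ha.symm ha'.symm
  have hσ (i : α) : β ((β⁻¹ * g⁻¹ * β') i) = g⁻¹ (β' i) := by simp
  refine ⟨g, β⁻¹ * g⁻¹ * β', funext fun i => ?_⟩
  rcases eq_or_ne i a' with rfl | hi
  · have hσa : (β⁻¹ * g⁻¹ * β') i = a := by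
      rw [← β.injective.eq_iff, hσ, inv_eq_iff_eq, hgβ]
    simp only [comp_apply, hσa, hgγ]
  · have hσa : (β⁻¹ * g⁻¹ * β') i ≠ a := by
      rw [← β.injective.ne_iff, hσ, Ne, inv_eq_iff_eq, hgβ]
      exact β'.injective.ne hi
    rw [comp_apply, comp_apply, hoff _ hσa, hσ, hoff' i hi, ← mul_apply, mul_inv_cancel,
      one_apply]

end Equiv.Perm

section Codes

variable {I : Type*} [Fintype I] {q : ℕ} {C : Set (I → Fin q)}

theorem distC_eq_zero_iff (hC : C.Nonempty) {γ : I → Fin q} : distC γ C = 0 ↔ γ ∈ C := by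
  refine ⟨fun h => ?_, fun h => Nat.le_zero.1 (Nat.sInf_le ⟨γ, h, hammingDist_self γ⟩)⟩
  obtain ⟨β, hβ, hd⟩ := Nat.sInf_mem (s := {d | ∃ β ∈ C, hammingDist γ β = d})
    (hC.image (hammingDist γ))
  rw [← distC, h, hammingDist_eq_zero] at hd
  exact hd ▸ hβ

theorem distC_eq_one_iff {γ : I → Fin q} :
    distC γ C = 1 ↔ γ ∉ C ∧ ∃ β ∈ C, hammingDist γ β = 1 := by
  constructor
  · intro h
    have hS : {d | ∃ β ∈ C, hammingDist γ β = d}.Nonempty :=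
      Set.nonempty_iff_ne_empty.2 fun hS => by simp [distC, hS] at h
    obtain ⟨β, hβ, hd⟩ := Nat.sInf_mem hS
    rw [← distC, h] at hd
    exact ⟨fun hγ => by simp [(distC_eq_zero_iff ⟨β, hβ⟩).2 hγ] at h, β, hβ, hd⟩
  · rintro ⟨hγ, β, hβ, hd⟩
    exact le_antisymm (Nat.sInf_le ⟨β, hβ, hd⟩)
      (Nat.one_le_iff_ne_zero.2 fun h0 => hγ ((distC_eq_zero_iff ⟨β, hβ⟩).1 h0))

theorem minDist_eq_iff {d : ℕ} (hd : d ≠ 0) :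
    minDist C = d ↔ (∃ β ∈ C, ∃ γ ∈ C, β ≠ γ ∧ hammingDist β γ = d) ∧
      ∀ β ∈ C, ∀ γ ∈ C, β ≠ γ → d ≤ hammingDist β γ := by
  constructor
  · intro h
    have hS : {d | ∃ β ∈ C, ∃ γ ∈ C, β ≠ γ ∧ hammingDist β γ = d}.Nonempty :=
      Set.nonempty_iff_ne_empty.2 fun hS => hd (by simp [← h, minDist, hS])
    refine ⟨h ▸ Nat.sInf_mem hS, fun β hβ γ hγ hne => ?_⟩
    exact h ▸ Nat.sInf_le ⟨β, hβ, γ, hγ, hne, rfl⟩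
  · rintro ⟨hex, hle⟩
    refine le_antisymm (Nat.sInf_le hex) (le_csInf ⟨d, hex⟩ ?_)
    rintro _ ⟨β, hβ, γ, hγ, hne, rfl⟩
    exact hle β hβ γ hγ hne

end Codes

section PermCode

open Equiv.Perm

variable {q : ℕ}

theorem alphaVtx_injective : Injective (alphaVtx : Perm (Fin q) → Fin q → Fin q) :=
  DFunLike.coe_injective

theorem ncard_sep_permCode (T : Set (Perm (Fin q))) (P : (Fin q → Fin q) → Prop) :
    {β ∈ permCode T | P β}.ncard = {h ∈ T | P ⇑h}.ncard := by
  have : {β ∈ permCode T | P β} = alphaVtx '' {h ∈ T | P ⇑h} := by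
    ext β
    constructor
    · rintro ⟨⟨h, hT, rfl⟩, hP⟩
      exact ⟨h, ⟨hT, hP⟩, rfl⟩
    · rintro ⟨h, ⟨hT, hP⟩, rfl⟩
      exact ⟨⟨h, hT, rfl⟩, hP⟩
  rw [this, Set.ncard_image_of_injective _ alphaVtx_injective]

theorem update_mem_cell_one_permCode {T : Set (Perm (Fin q))} {s : Perm (Fin q)} (hs : s ∈ T)
    {x y : Fin q} (hxy : x ≠ y) : update ⇑s x (s y) ∈ cell (permCode T) 1 := by
  refine distC_eq_one_iff.2
    ⟨?_, _, ⟨s, hs, rfl⟩, hammingDist_update_self_s18 _ (s.injective.ne hxy.symm)⟩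
  rintro ⟨h, -, hh⟩
  have hinj : Injective (update ⇑s x (s y)) := hh ▸ h.injective
  exact hxy (hinj (by simp [update_of_ne hxy.symm]))

theorem mul_swap_mem_of_regularUpTo_one {T : Set (Perm (Fin q))}
    (hreg : RegularUpTo (permCode T) 1) {t : Perm (Fin q)} {x₀ y₀ : Fin q} (hxy₀ : x₀ ≠ y₀)
    (ht : t ∈ T) (ht' : t * swap x₀ y₀ ∈ T) {s : Perm (Fin q)} (hs : s ∈ T) {x y : Fin q}
    (hxy : x ≠ y) : s * swap x y ∈ T := by
  have hnbrs (s : Perm (Fin q)) {x y : Fin q} (hxy : x ≠ y) :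
      {β ∈ permCode T | hammingDist (update ⇑s x (s y)) β = 1}.ncard =
        (T ∩ {s, s * swap x y}).ncard := by
    rw [ncard_sep_permCode]
    congr 1
    ext h
    simp [hammingDist_update_eq_one_iff hxy, and_or_left]
  have hcount := hreg 1 le_rfl _ (update_mem_cell_one_permCode hs hxy) _
    (update_mem_cell_one_permCode ht hxy₀) 1
  rw [hnbrs s hxy, hnbrs t hxy₀, Set.inter_eq_right.2 (Set.pair_subset ht ht'),
    Set.ncard_pair (by simpa using hxy₀)] at hcount
  have hpair : T ∩ {s, s * swap x y} = {s, s * swap x y} :=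
    Set.eq_of_subset_of_ncard_le Set.inter_subset_right
      (hcount ▸ (Set.ncard_insert_le _ _).trans (by simp))
  exact (hpair.superset (Set.mem_insert_of_mem s rfl)).1

theorem regularUpTo_one_permCode_univ :
    RegularUpTo (permCode (Set.univ : Set (Perm (Fin q)))) 1 := by
  intro i hi γ hγ γ' hγ' k
  suffices ∃ g σ : Perm (Fin q), γ' = g ∘ γ ∘ σ by
    obtain ⟨g, σ, rfl⟩ := this
    simp only [ncard_sep_permCode, Set.sep_univ]
    exact (ncard_hammingDist_comp γ g σ k).symm
  interval_cases i
  · have hC : (permCode (Set.univ : Set (Perm (Fin q)))).Nonempty := ⟨_, 1, trivial, rfl⟩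
    obtain ⟨β, -, rfl⟩ := (distC_eq_zero_iff hC).1 hγ
    obtain ⟨β', -, rfl⟩ := (distC_eq_zero_iff hC).1 hγ'
    exact ⟨β' * β⁻¹, 1, funext fun i => by simp [alphaVtx]⟩
  · obtain ⟨-, _, ⟨β, -, rfl⟩, h⟩ := distC_eq_one_iff.1 hγ
    obtain ⟨-, _, ⟨β', -, rfl⟩, h'⟩ := distC_eq_one_iff.1 hγ'
    exact exists_comp_eq_of_hammingDist_eq_one h h'

theorem minDist_permCode_univ (hq : 2 ≤ q) :
    minDist (permCode (Set.univ : Set (Perm (Fin q)))) = 2 := by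
  have := Fin.nontrivial_iff_two_le.2 hq
  obtain ⟨x, y, hxy⟩ := exists_pair_ne (Fin q)
  refine (minDist_eq_iff two_ne_zero).2
    ⟨⟨_, ⟨1, trivial, rfl⟩, _, ⟨swap x y, trivial, rfl⟩, ?_, ?_⟩, ?_⟩
  · exact alphaVtx_injective.ne fun h => hxy (by simpa using (congrArg (· x) h))
  · exact (hammingDist_eq_card_support _ _).trans
      (by rw [inv_one, one_mul, card_support_swap hxy])
  · rintro _ ⟨σ, -, rfl⟩ _ ⟨τ, -, rfl⟩ hne
    exact two_le_hammingDist (ne_of_apply_ne _ hne)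

end PermCode

/-- Lemma 5.2: for `T ⊆ S_q`, the permutation code `C(T)` is
`1`-regular with minimum distance `2` if and only if `T = S_q`. -/
theorem one_regular_permutation_code (q : ℕ) (hq : 2 ≤ q) (T : Set (Equiv.Perm (Fin q))) :
    (RegularUpTo (permCode T) 1 ∧ minDist (permCode T) = 2) ↔ T = Set.univ := by
  constructor
  · rintro ⟨hreg, hmin⟩
    obtain ⟨_, ⟨t, ht, rfl⟩, _, ⟨t', ht', rfl⟩, -, hd⟩ :=
      ((minDist_eq_iff two_ne_zero).1 hmin).1
    obtain ⟨x₀, y₀, hxy₀, rfl⟩ := Equiv.Perm.exists_eq_mul_swap_of_hammingDist_eq_two hd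
    exact Equiv.Perm.eq_univ_of_mul_swap_mem ht fun s hs x y hxy =>
      mul_swap_mem_of_regularUpTo_one hreg hxy₀ ht ht' hs hxy
  · rintro rfl
    exact ⟨regularUpTo_one_permCode_univ, minDist_permCode_univ hq⟩
end
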